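/- Let G act transitively on X with base point x₀ and stabilizer H. For φ, ψ, χ ∈ L¹(X) the mixed associativity relation ((φ • ψ) * χ̃)(g) = (φ • (χ ⊛ ψ))(g) holds, where (φ • ψ)(g) = ∫_X φ(x) conj(ψ(g⁻¹·x)) dx, χ̃(g) = χ(g·x₀) is the lift of χ to G, (F * χ̃)(g) = ∫_G F(h) χ̃(h⁻¹g) dμ_G(h) for F ∈ L¹(G), and (χ ⊛ ψ)(x) = ∫_G conj(χ(g·x₀)) ψ(g·x) dμ_G(g). -/

import Mathlib

open MeasureTheory

noncomputable section

/-- The `•`-product `(φ • ψ)(g) = ∫_X φ(x) conj(ψ(g⁻¹·x)) dx`, with the `G`-invariant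
integral over `X` given by `∫_X f dx = ∫_G f(u·x₀) dμ_G(u)`. -/
def bulletProduct {G X : Type*} [Group G] [MulAction G X] [MeasurableSpace G]
    (μ : Measure G) (x₀ : X) (φ ψ : X → ℂ) : G → ℂ :=
  fun g => ∫ u, φ (u • x₀) * (starRingEnd ℂ) (ψ (g⁻¹ • (u • x₀))) ∂μ

/-- The zonal product `(χ ⊛ ψ)(x) = ∫_G conj(χ(g·x₀)) ψ(g·x) dμ_G(g)`. -/
def zonalProduct {G X : Type*} [Group G] [MulAction G X] [MeasurableSpace G]
    (μ : Measure G) (x₀ : X) (χ ψ : X → ℂ) : X → ℂ :=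
  fun x => ∫ g, (starRingEnd ℂ) (χ (g • x₀)) * ψ (g • x) ∂μ

/-- The group convolution on `G` of `F : G → ℂ` with the lift `χ̃(g) = χ(g·x₀)`. -/
def convLift {G X : Type*} [Group G] [MulAction G X] [MeasurableSpace G]
    (μ : Measure G) (x₀ : X) (F : G → ℂ) (χ : X → ℂ) : G → ℂ :=
  fun g => ∫ h, F h * χ ((h⁻¹ * g) • x₀) ∂μ

/-- Mixed associativity: `(φ • ψ) * χ̃ = φ • (χ ⊛ ψ)` for `φ, ψ, χ ∈ L¹(X)`. -/
theorem bullet_conv_zonal_assoc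
    {G X : Type*} [Group G] [TopologicalSpace G] [IsTopologicalGroup G] [CompactSpace G]
    [MeasurableSpace G] [BorelSpace G]
    [MulAction G X] [MulAction.IsPretransitive G X]
    (μ : Measure G) [IsProbabilityMeasure μ]
    [μ.IsMulLeftInvariant] [μ.IsMulRightInvariant]
    (x₀ : X) (φ ψ χ : X → ℂ)
    (hφ : Integrable (fun g => φ (g • x₀)) μ)
    (hψ : Integrable (fun g => ψ (g • x₀)) μ)
    (hχ : Integrable (fun g => χ (g • x₀)) μ)
    (hFub : ∀ g : G, Integrable
      (fun q : G × G =>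
        φ (q.1 • x₀) * (starRingEnd ℂ) (ψ (q.2⁻¹ • (q.1 • x₀))) * χ ((q.2⁻¹ * g) • x₀))
      (μ.prod μ)) :
    ∀ g : G, convLift μ x₀ (bulletProduct μ x₀ φ ψ) χ g
      = bulletProduct μ x₀ φ (zonalProduct μ x₀ χ ψ) g := by
  -- The measure is invariant under inversion, by uniqueness of Haar probability measures.
  have hHaar : μ.IsHaarMeasure :=
    Measure.isHaarMeasure_of_isCompact_nonempty_interior μ Set.univ isCompact_univ
      (by simp) (by simp) (by simp)
  have hinvP : IsProbabilityMeasure μ.inv := by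
    constructor
    rw [Measure.inv, Measure.map_apply measurable_inv .univ]
    simp
  have hinvH : μ.inv.IsHaarMeasure :=
    Measure.isHaarMeasure_of_isCompact_nonempty_interior μ.inv Set.univ isCompact_univ
      (by simp) (by simp [hinvP.measure_univ]) (by simp [hinvP.measure_univ])
  have : μ.IsInvInvariant := ⟨Measure.isHaarMeasure_eq_of_isProbabilityMeasure μ.inv μ⟩
  intro g
  show (∫ h, (∫ u, φ (u • x₀) * (starRingEnd ℂ) (ψ (h⁻¹ • (u • x₀))) ∂μ)
          * χ ((h⁻¹ * g) • x₀) ∂μ)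
      = ∫ u, φ (u • x₀) * (starRingEnd ℂ)
          ((∫ k, (starRingEnd ℂ) (χ (k • x₀)) * ψ (k • (g⁻¹ • (u • x₀))) ∂μ)) ∂μ
  have step1 : (∫ h, (∫ u, φ (u • x₀) * (starRingEnd ℂ) (ψ (h⁻¹ • (u • x₀))) ∂μ)
          * χ ((h⁻¹ * g) • x₀) ∂μ)
      = ∫ h, ∫ u, φ (u • x₀) * (starRingEnd ℂ) (ψ (h⁻¹ • (u • x₀)))
          * χ ((h⁻¹ * g) • x₀) ∂μ ∂μ := by
    simp_rw [← integral_mul_const]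
  rw [step1, ← integral_integral_swap (hFub g)]
  congr 1
  ext u
  have step2 : ∫ h, φ (u • x₀) * (starRingEnd ℂ) (ψ (h⁻¹ • (u • x₀))) * χ ((h⁻¹ * g) • x₀) ∂μ
      = φ (u • x₀) * ∫ h, (starRingEnd ℂ) (ψ (h⁻¹ • (u • x₀))) * χ ((h⁻¹ * g) • x₀) ∂μ := by
    simp_rw [mul_assoc, integral_const_mul]
  rw [step2]
  congr 1
  rw [← integral_conj]
  simp only [map_mul, RingHomCompTriple.comp_apply, RingHom.id_apply, Complex.conj_conj]
  calc ∫ h, (starRingEnd ℂ) (ψ (h⁻¹ • (u • x₀))) * χ ((h⁻¹ * g) • x₀) ∂μ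
      = ∫ h, (starRingEnd ℂ) (ψ (h • (u • x₀))) * χ ((h * g) • x₀) ∂μ :=
        integral_inv_eq_self (fun h => (starRingEnd ℂ) (ψ (h • (u • x₀))) * χ ((h * g) • x₀)) μ
    _ = ∫ k, (starRingEnd ℂ) (ψ ((k * g⁻¹) • (u • x₀))) * χ (k • x₀) ∂μ := by
        rw [← integral_mul_right_eq_self
          (fun k => (starRingEnd ℂ) (ψ ((k * g⁻¹) • (u • x₀))) * χ (k • x₀)) g]
        simp [mul_assoc]
    _ = ∫ k, χ (k • x₀) * (starRingEnd ℂ) (ψ (k • (g⁻¹ • (u • x₀)))) ∂μ := by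
        simp_rw [mul_comm, mul_smul]

end
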